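/- arXiv:1004.1833 — 2 statements merged into one kernel-verified Lean document; each statement's English description precedes it below -/
import Mathlib

section
/- Let a ≥ 0, δ > 0, and suppose 3a² - 4 < 6/δ. Define Ψ on [0,∞) by the solution of Ψ' = 3a²Ψ/(6+4t) - 4π with Ψ(0) = 4πδ. Then there exists T > 0 with Ψ(T) = 0. -/
/-! With `s = 1 + 2t/3` and `q = 3a²/4` the equation reads `Ψ' = (2/3) q Ψ / s - 4π`, so the
weighted function `s^(-q) Ψ` has derivative `-4π s^(-q)`. As `s ≥ 1`, this is at most
`-4π s^(-p)` for every `p ≥ q`, and for `p > 1` the latter integrates over `[0, ∞)` to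
`-6π / (p - 1)`. The hypothesis `3a² - 4 < 6/δ` is what allows a choice of `p > 1` with
`Ψ(0) = 4πδ < 6π / (p - 1)`; then `Ψ` becomes negative, so it vanishes in between. -/

open Real Filter Set Topology

lemma le_of_hasDerivAt_le_of_nonneg {f g f' g' : ℝ → ℝ}
    (hf : ∀ t ≥ (0:ℝ), HasDerivAt f (f' t) t) (hg : ∀ t ≥ (0:ℝ), HasDerivAt g (g' t) t)
    (h0 : f 0 ≤ g 0) (hle : ∀ t ≥ (0:ℝ), f' t ≤ g' t) {t : ℝ} (ht : 0 ≤ t) : f t ≤ g t :=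
  image_le_of_deriv_right_le_deriv_boundary
    (fun x hx => (hf x hx.1).continuousAt.continuousWithinAt)
    (fun x hx => (hf x hx.1).hasDerivWithinAt) h0
    (fun x hx => (hg x hx.1).continuousAt.continuousWithinAt)
    (fun x hx => (hg x hx.1).hasDerivWithinAt) (fun x hx => hle x hx.1) ⟨ht, le_rfl⟩

lemma exists_pos_eq_zero_of_hasDerivAt {Ψ Ψ' : ℝ → ℝ} (hΨ : ∀ t ≥ (0:ℝ), HasDerivAt Ψ (Ψ' t) t)
    (h0 : 0 < Ψ 0) {T : ℝ} (hT : 0 ≤ T) (hΨT : Ψ T < 0) : ∃ t > (0:ℝ), Ψ t = 0 := by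
  have hcont : ContinuousOn Ψ (Icc 0 T) := fun x hx =>
    (hΨ x hx.1).continuousAt.continuousWithinAt
  obtain ⟨t, ht, hΨt⟩ := intermediate_value_Icc' hT hcont ⟨hΨT.le, h0.le⟩
  refine ⟨t, ht.1.lt_of_ne ?_, hΨt⟩
  rintro rfl
  exact h0.ne' hΨt

section

variable {k t : ℝ}

lemma hasDerivAt_one_add_mul_rpow (p : ℝ) (h : 0 < 1 + k * t) :
    HasDerivAt (fun t => (1 + k * t) ^ p) (p * k * (1 + k * t) ^ (p - 1)) t := by
  have hlin : HasDerivAt (fun t => 1 + k * t) k t := by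
    simpa using ((hasDerivAt_id t).const_mul k).const_add 1
  convert hlin.rpow_const (p := p) (Or.inl h.ne') using 1
  ring

lemma hasDerivAt_rpow_neg_mul_of_linear_ode {q c : ℝ} {Ψ : ℝ → ℝ}
    (hΨ : HasDerivAt Ψ (q * k * Ψ t / (1 + k * t) - c) t) (h : 0 < 1 + k * t) :
    HasDerivAt (fun t => (1 + k * t) ^ (-q) * Ψ t) (-c * (1 + k * t) ^ (-q)) t := by
  refine ((hasDerivAt_one_add_mul_rpow (-q) h).mul hΨ).congr_deriv ?_
  rw [rpow_sub h, rpow_one]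
  field_simp
  ring

lemma hasDerivAt_integral_one_add_mul_rpow_neg {p : ℝ} (hk : k ≠ 0) (hp : p ≠ 1)
    (h : 0 < 1 + k * t) :
    HasDerivAt (fun t => (1 - (1 + k * t) ^ (1 - p)) / (k * (p - 1))) ((1 + k * t) ^ (-p)) t := by
  have hp' : p - 1 ≠ 0 := sub_ne_zero.mpr hp
  refine (((hasDerivAt_one_add_mul_rpow (1 - p) h).const_sub 1).div_const
    (k * (p - 1))).congr_deriv ?_
  rw [show 1 - p - 1 = -p by ring]
  field_simp
  ring

lemma tendsto_one_add_mul_rpow_atTop {p : ℝ} (hk : 0 < k) (hp : p < 0) :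
    Tendsto (fun t => (1 + k * t) ^ p) atTop (𝓝 0) := by
  have hlin : Tendsto (fun t : ℝ => 1 + k * t) atTop atTop :=
    tendsto_atTop_add_const_left _ 1 (tendsto_id.const_mul_atTop hk)
  simpa [Function.comp_def] using (tendsto_rpow_neg_atTop (neg_pos.mpr hp)).comp hlin

end

lemma exists_pos_eq_zero_of_linear_ode {k q p c : ℝ} {Ψ : ℝ → ℝ} (hk : 0 < k) (hqp : q ≤ p)
    (hp : 1 < p) (hΨ0 : 0 < Ψ 0) (hcrit : k * (p - 1) * Ψ 0 < c)
    (hΨ : ∀ t ≥ (0:ℝ), HasDerivAt Ψ (q * k * Ψ t / (1 + k * t) - c) t) :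
    ∃ T > (0:ℝ), Ψ T = 0 := by
  have hpos : ∀ t ≥ (0:ℝ), 0 < 1 + k * t := fun t ht => by positivity
  have hkp : 0 < k * (p - 1) := mul_pos hk (sub_pos.mpr hp)
  have hc : 0 < c := (mul_pos hkp hΨ0).trans hcrit
  set B : ℝ → ℝ := fun t => Ψ 0 - c * ((1 - (1 + k * t) ^ (1 - p)) / (k * (p - 1)))
  have hΨ_le : ∀ t ≥ (0:ℝ), (1 + k * t) ^ (-q) * Ψ t ≤ B t := fun t ht =>
    le_of_hasDerivAt_le_of_nonneg
      (fun t ht => hasDerivAt_rpow_neg_mul_of_linear_ode (hΨ t ht) (hpos t ht))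
      (fun t ht => ((hasDerivAt_integral_one_add_mul_rpow_neg hk.ne' hp.ne' (hpos t ht)).const_mul
        c).const_sub (Ψ 0))
      (by simp)
      (fun t ht => by
        have := rpow_le_rpow_of_exponent_le (by nlinarith : 1 ≤ 1 + k * t) (neg_le_neg hqp)
        nlinarith)
      ht
  have hB_lim : Tendsto B atTop (𝓝 (Ψ 0 - c * ((1 - 0) / (k * (p - 1))))) :=
    (((tendsto_one_add_mul_rpow_atTop hk (by linarith : 1 - p < 0)).const_sub 1).div_const _
      |>.const_mul c).const_sub (Ψ 0)
  have hlim_neg : Ψ 0 - c * ((1 - 0) / (k * (p - 1))) < 0 := by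
    rw [sub_zero, mul_one_div, sub_neg, lt_div_iff₀ hkp]
    linarith
  obtain ⟨T, hBT, hT⟩ := ((hB_lim.eventually (gt_mem_nhds hlim_neg)).and
    (eventually_ge_atTop 0)).exists
  have hΨT : Ψ T < 0 :=
    neg_of_mul_neg_right ((hΨ_le T hT).trans_lt hBT) (rpow_pos_of_pos (hpos T hT) _).le
  exact exists_pos_eq_zero_of_hasDerivAt hΨ hΨ0 hT hΨT

theorem stmt7_general (a δ : ℝ) (hδ : 0 < δ) (hcrit : 3 * a^2 - 4 < 6 / δ)
    (Ψ : ℝ → ℝ) (hΨ0 : Ψ 0 = 4 * π * δ)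
    (hΨ : ∀ t ≥ (0:ℝ), HasDerivAt Ψ (3 * a^2 * Ψ t / (6 + 4 * t) - 4 * π) t) :
    ∃ T > (0:ℝ), Ψ T = 0 := by
  set q := 3 * a ^ 2 / 4
  set p := max q (1 + 1 / δ)
  have hp : (p - 1) * (2 * δ) < 3 := by
    rw [← lt_div_iff₀ (by positivity), sub_lt_iff_lt_add']
    refine max_lt ?_ ?_
    · rw [← sub_lt_iff_lt_add', lt_div_iff₀ (by positivity)]
      rw [lt_div_iff₀ hδ] at hcrit
      linarith [show (q - 1) * (2 * δ) = (3 * a ^ 2 - 4) * δ / 2 by ring]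
    · gcongr 1 + ?_
      rw [div_lt_div_iff₀ hδ (by positivity)]
      linarith
  refine exists_pos_eq_zero_of_linear_ode (k := 2 / 3) (q := q) (p := p) (c := 4 * π)
    (by norm_num) (le_max_left _ _) (lt_max_of_lt_right (by simpa using hδ))
    (by rw [hΨ0]; positivity) (by rw [hΨ0]; nlinarith [pi_pos]) fun t ht => ?_
  convert hΨ t ht using 2
  field_simp
  ring

/-- Proposition 2.4 at the ODE level: if `3a² - 4 < 6/δ` then the barrier `Ψ`
solving `Ψ' = 3a²Ψ/(6+4t) - 4π`, `Ψ(0) = 4πδ`, vanishes at some `T > 0`. -/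
theorem stmt7 (a δ : ℝ) (ha : 0 ≤ a) (hδ : 0 < δ) (hcrit : 3 * a^2 - 4 < 6 / δ)
    (Ψ : ℝ → ℝ) (hΨ0 : Ψ 0 = 4 * π * δ)
    (hΨ : ∀ t ≥ (0:ℝ), HasDerivAt Ψ (3 * a^2 * Ψ t / (6 + 4 * t) - 4 * π) t) :
    ∃ T > (0:ℝ), Ψ T = 0 :=
  stmt7_general a δ hδ hcrit Ψ hΨ0 hΨ
end

section
/- For α > 0, the function ρ(r) = (ρ₀/(2^{1/α}r₀))·r·(1 + r₀^α/(2r^α))^{2/α} on (0,∞) attains its minimum value ρ₀ at r = r₀/2^{1/α}, and ρ'(r) > 0 for r > r₀/2^{1/α}. -/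
/-!
Put `m = r₀ / 2^{1/α}` and `r = m eˣ`. Then `r₀^α / (2 r^α) = e^{-αx}` and, since
`1 + e^{-αx} = 2 e^{-αx/2} cosh (αx/2)`, the profile becomes `ρ = ρ₀ cosh (αx/2)^{2/α}`.
So `ρ ≥ ρ₀` with equality at `x = 0`, and `ρ' = ρ₀ cosh (αx/2)^{2/α-1} sinh (αx/2) / r > 0`
for `x > 0`.
-/

open Real

lemma one_add_exp_neg_eq_mul_cosh (u : ℝ) : 1 + exp (-u) = 2 * exp (-(u / 2)) * cosh (u / 2) := by
  rw [cosh_eq, mul_assoc, mul_div_assoc', mul_div_cancel₀ _ two_ne_zero, mul_add,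
    ← exp_add, ← exp_add, neg_add_cancel, exp_zero, ← neg_add, add_halves]

lemma exp_mul_one_add_exp_neg_rpow {α : ℝ} (hα : α ≠ 0) (x : ℝ) :
    exp x * ((1 + exp (-(α * x))) / 2) ^ (2 / α) = cosh (α / 2 * x) ^ (2 / α) := by
  have hexponent : x + -(α * x / 2) * (2 / α) = 0 := by field_simp; ring
  rw [one_add_exp_neg_eq_mul_cosh, mul_assoc, mul_div_cancel_left₀ _ two_ne_zero,
    mul_rpow (exp_pos _).le (cosh_pos _).le, ← exp_mul, ← mul_assoc, ← exp_add, hexponent,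
    exp_zero, one_mul, mul_div_right_comm]

lemma hasDerivAt_cosh_mul_log_div_rpow (k p : ℝ) {m r : ℝ} (hm : m ≠ 0) (hr : r ≠ 0) :
    HasDerivAt (fun r => cosh (k * log (r / m)) ^ p)
      (p * k * cosh (k * log (r / m)) ^ (p - 1) * sinh (k * log (r / m)) / r) r := by
  have hlog : HasDerivAt (fun r => log (r / m)) r⁻¹ r := by
    convert ((hasDerivAt_id' r).div_const m).log (div_ne_zero hr hm) using 1
    field_simp
  convert ((hlog.const_mul k).cosh).rpow_const (p := p) (Or.inl (cosh_pos _).ne') using 1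
  field_simp

lemma areal_radius_eq_cosh {α ρ₀ r₀ r : ℝ} (hα : α ≠ 0) (hr₀ : 0 < r₀) (hr : 0 < r) :
    ρ₀ / ((2:ℝ) ^ (1/α) * r₀) * r * (1 + r₀ ^ α / (2 * r ^ α)) ^ (2/α) =
      ρ₀ * cosh (α / 2 * log (r / (r₀ / (2:ℝ) ^ (1/α)))) ^ (2/α) := by
  set m := r₀ / (2:ℝ) ^ (1/α) with hm_def
  have h2 : (0:ℝ) < 2 ^ (1/α) := by positivity
  have hm : 0 < m := by positivity
  have hmα : m ^ α = r₀ ^ α / 2 := by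
    rw [hm_def, div_rpow hr₀.le h2.le, ← rpow_mul zero_le_two, one_div_mul_cancel hα, rpow_one]
  have hratio : r₀ ^ α / (2 * r ^ α) = exp (-(α * log (r / m))) := by
    rw [← mul_neg, ← log_inv, inv_div, mul_comm α, exp_mul, exp_log (div_pos hm hr),
      div_rpow hm.le hr.le, hmα, div_div]
  have hsq : (2:ℝ) ^ (2/α) = 2 ^ (1/α) * 2 ^ (1/α) := by
    rw [← rpow_add zero_lt_two]; ring_nf
  rw [hratio, ← exp_mul_one_add_exp_neg_rpow hα, exp_log (div_pos hr hm),
    div_rpow (by positivity) zero_le_two, hsq, hm_def]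
  field_simp

/-- The areal radius `ρ(r) = (ρ₀/(2^{1/α}r₀)) r (1 + r₀^α/(2r^α))^{2/α}` attains
its minimum value `ρ₀` at `r = r₀/2^{1/α}` and is strictly increasing beyond. -/
theorem stmt12 (α ρ₀ r₀ : ℝ) (hα : 0 < α) (hρ₀ : 0 < ρ₀) (hr₀ : 0 < r₀)
    (ρ : ℝ → ℝ)
    (hρ : ∀ r, ρ r = (ρ₀ / ((2:ℝ) ^ (1/α) * r₀)) * r * (1 + r₀ ^ α / (2 * r ^ α)) ^ (2/α)) :
    ρ (r₀ / (2:ℝ) ^ (1/α)) = ρ₀ ∧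
    (∀ r > (0:ℝ), ρ₀ ≤ ρ r) ∧
    (∀ r > r₀ / (2:ℝ) ^ (1/α), 0 < deriv ρ r) := by
  set m := r₀ / (2:ℝ) ^ (1/α)
  have hm : 0 < m := by positivity
  have hρ_cosh : ∀ r > 0, ρ r = ρ₀ * cosh (α / 2 * log (r / m)) ^ (2/α) := fun r hr =>
    (hρ r).trans (areal_radius_eq_cosh hα.ne' hr₀ hr)
  refine ⟨?_, fun r hr => ?_, fun r hr => ?_⟩
  · rw [hρ_cosh m hm, div_self hm.ne', log_one, mul_zero, cosh_zero, one_rpow, mul_one]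
  · rw [hρ_cosh r hr]
    exact le_mul_of_one_le_right hρ₀.le (one_le_rpow (one_le_cosh _) (by positivity))
  · have hr0 : 0 < r := hm.trans hr
    have hρ_near : ρ =ᶠ[nhds r] fun r => ρ₀ * cosh (α / 2 * log (r / m)) ^ (2/α) :=
      (eventually_gt_nhds hr0).mono hρ_cosh
    have hsinh : 0 < sinh (α / 2 * log (r / m)) :=
      sinh_pos_iff.2 (mul_pos (by positivity) (log_pos ((one_lt_div hm).2 hr)))
    rw [hρ_near.deriv_eq,
      ((hasDerivAt_cosh_mul_log_div_rpow _ _ hm.ne' hr0.ne').const_mul ρ₀).deriv]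
    positivity
end
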